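/- Let A and B be positive semidefinite n×n complex matrices and q ∈ ℂ with 0 < |q| ≤ 1. Then |q|²·w_q(AB) ≤ w_q(A)·w_q(B). -/

import Mathlib

open scoped ComplexOrder

noncomputable def qNumRadius {H : Type*} [NormedAddCommGroup H] [InnerProductSpace ℂ H]
    (q : ℂ) (T : H →L[ℂ] H) : ℝ :=
  sSup {r : ℝ | ∃ x y : H, ‖x‖ = 1 ∧ ‖y‖ = 1 ∧ (inner ℂ y x : ℂ) = q ∧
    r = ‖(inner ℂ y (T x) : ℂ)‖}

noncomputable def numRadius {H : Type*} [NormedAddCommGroup H] [InnerProductSpace ℂ H]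
    (T : H →L[ℂ] H) : ℝ :=
  sSup {r : ℝ | ∃ x : H, ‖x‖ = 1 ∧ r = ‖(inner ℂ x (T x) : ℂ)‖}

/-- The continuous linear map on Euclidean space associated to a matrix. -/
noncomputable def mCLM {n : ℕ} (A : Matrix (Fin n) (Fin n) ℂ) :
    EuclideanSpace ℂ (Fin n) →L[ℂ] EuclideanSpace ℂ (Fin n) :=
  Matrix.toEuclideanCLM (𝕜 := ℂ) A

/-- The numerical range of `A` is contained in the sector `S_α`. -/
def InSector {n : ℕ} (α : ℝ) (A : Matrix (Fin n) (Fin n) ℂ) : Prop :=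
  ∀ x : EuclideanSpace ℂ (Fin n), ‖x‖ = 1 →
    0 < (inner ℂ x (mCLM A x) : ℂ).re ∧
      |(inner ℂ x (mCLM A x) : ℂ).im| ≤ Real.tan α * (inner ℂ x (mCLM A x) : ℂ).re

/-!
If `x` is a unit vector and `z ⊥ x` with `‖z‖² = 1 - ‖q‖²`, then `y± = q̄ x ± z` are unit vectors
with `⟪y±, x⟫ = q`, and `⟪y₊, T x⟫ + ⟪y₋, T x⟫ = 2 q ⟪x, T x⟫`; hence `‖q‖ w(T) ≤ w_q(T)`.
Such a `z` exists as soon as some unit pair realises `q`. Self-adjoint operators satisfy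
`‖T‖ ≤ w(T)`, so `‖q‖ ‖A‖ ≤ w_q(A)` and `‖q‖ ‖B‖ ≤ w_q(B)`, while `w_q(AB) ≤ ‖A‖ ‖B‖`.
If no unit pair realises `q`, every `w_q` is `sSup ∅ = 0`.
-/

section

variable {H : Type*} [NormedAddCommGroup H] [InnerProductSpace ℂ H]

theorem norm_inner_apply_le_opNorm (T : H →L[ℂ] H) {x y : H} (hx : ‖x‖ = 1) (hy : ‖y‖ = 1) :
    ‖(inner ℂ y (T x) : ℂ)‖ ≤ ‖T‖ := by
  simpa [hx, hy] using (norm_inner_le_norm y (T x)).trans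
    (mul_le_mul_of_nonneg_left (T.le_opNorm x) (norm_nonneg y))

theorem qNumRadius_nonneg (q : ℂ) (T : H →L[ℂ] H) : 0 ≤ qNumRadius q T :=
  Real.sSup_nonneg <| by
    rintro r ⟨x, y, -, -, -, rfl⟩
    exact norm_nonneg _

theorem qNumRadius_le_opNorm (q : ℂ) (T : H →L[ℂ] H) : qNumRadius q T ≤ ‖T‖ :=
  Real.sSup_le (fun _ ⟨_, _, hx, hy, _, hr⟩ ↦ hr ▸ norm_inner_apply_le_opNorm T hx hy)
    (norm_nonneg T)

theorem norm_inner_le_qNumRadius (T : H →L[ℂ] H) {x y : H} (hx : ‖x‖ = 1) (hy : ‖y‖ = 1) :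
    ‖(inner ℂ y (T x) : ℂ)‖ ≤ qNumRadius (inner ℂ y x) T :=
  le_csSup ⟨‖T‖, fun _ ⟨_, _, hx, hy, _, hr⟩ ↦ hr ▸ norm_inner_apply_le_opNorm T hx hy⟩
    ⟨x, y, hx, hy, rfl, rfl⟩

theorem qNumRadius_eq_zero {q : ℂ}
    (hq : ¬∃ x y : H, ‖x‖ = 1 ∧ ‖y‖ = 1 ∧ (inner ℂ y x : ℂ) = q) (T : H →L[ℂ] H) :
    qNumRadius q T = 0 := by
  rw [qNumRadius, ← Real.sSup_empty]
  congr 1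
  refine Set.eq_empty_iff_forall_notMem.mpr ?_
  rintro r ⟨x, y, hx, hy, hyx, -⟩
  exact hq ⟨x, y, hx, hy, hyx⟩

theorem numRadius_nonneg (T : H →L[ℂ] H) : 0 ≤ numRadius T :=
  Real.sSup_nonneg <| by
    rintro r ⟨x, -, rfl⟩
    exact norm_nonneg _

theorem norm_inner_le_numRadius (T : H →L[ℂ] H) {x : H} (hx : ‖x‖ = 1) :
    ‖(inner ℂ x (T x) : ℂ)‖ ≤ numRadius T :=
  le_csSup ⟨‖T‖, fun _ ⟨_, hx, hr⟩ ↦ hr ▸ norm_inner_apply_le_opNorm T hx hx⟩ ⟨x, hx, rfl⟩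

theorem opNorm_le_numRadius {T : H →L[ℂ] H} (hT : (T : H →ₗ[ℂ] H).IsSymmetric) :
    ‖T‖ ≤ numRadius T := by
  rw [T.norm_eq_iSup_rayleighQuotient hT]
  refine ciSup_le fun x ↦ ?_
  rcases eq_or_ne x 0 with rfl | hx
  · simpa using numRadius_nonneg T
  have hu : ‖(‖x‖⁻¹ : ℂ) • x‖ = 1 := by
    rw [norm_smul, norm_inv, Complex.norm_real, norm_norm,
      inv_mul_cancel₀ (norm_ne_zero_iff.mpr hx)]
  rw [← T.rayleigh_smul x (c := (‖x‖⁻¹ : ℂ)) (by simpa using hx)]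
  simp only [ContinuousLinearMap.rayleighQuotient, ContinuousLinearMap.reApplyInnerSelf_apply, hu,
    one_pow, div_one]
  exact (RCLike.abs_re_le_norm _).trans
    ((norm_inner_symm _ _).trans_le (norm_inner_le_numRadius T hu))

theorem norm_conj_smul_add_eq_one {q : ℂ} {x z : H} (hx : ‖x‖ = 1)
    (hxz : (inner ℂ x z : ℂ) = 0) (hz : ‖z‖ ^ 2 = 1 - ‖q‖ ^ 2) :
    ‖starRingEnd ℂ q • x + z‖ = 1 := by
  have horth : (inner ℂ (starRingEnd ℂ q • x) z : ℂ) = 0 := by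
    rw [inner_smul_left, hxz, mul_zero]
  have hsq := norm_add_sq_eq_norm_sq_add_norm_sq_of_inner_eq_zero _ _ horth
  rw [norm_smul, Complex.norm_conj, hx, mul_one, ← sq, ← sq, ← sq, hz, add_sub_cancel] at hsq
  exact (pow_eq_one_iff_of_nonneg (norm_nonneg _) two_ne_zero).mp hsq

theorem inner_conj_smul_add_left_self {q : ℂ} {x z : H} (hx : ‖x‖ = 1)
    (hxz : (inner ℂ x z : ℂ) = 0) :
    (inner ℂ (starRingEnd ℂ q • x + z) x : ℂ) = q := by
  rw [inner_add_left, inner_smul_left, Complex.conj_conj, inner_self_eq_norm_sq_to_K, hx,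
    inner_eq_zero_symm.mp hxz]
  simp

theorem norm_mul_norm_inner_le_qNumRadius (T : H →L[ℂ] H) {q : ℂ} {x z : H} (hx : ‖x‖ = 1)
    (hxz : (inner ℂ x z : ℂ) = 0) (hz : ‖z‖ ^ 2 = 1 - ‖q‖ ^ 2) :
    ‖q‖ * ‖(inner ℂ x (T x) : ℂ)‖ ≤ qNumRadius q T := by
  have hxz' : (inner ℂ x (-z) : ℂ) = 0 := by rw [inner_neg_right, hxz, neg_zero]
  have hz' : ‖-z‖ ^ 2 = 1 - ‖q‖ ^ 2 := by rw [norm_neg, hz]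
  have hplus := norm_inner_le_qNumRadius T hx (norm_conj_smul_add_eq_one hx hxz hz)
  have hminus := norm_inner_le_qNumRadius T hx (norm_conj_smul_add_eq_one hx hxz' hz')
  rw [inner_conj_smul_add_left_self hx hxz] at hplus
  rw [inner_conj_smul_add_left_self hx hxz'] at hminus
  have hsum : (inner ℂ (starRingEnd ℂ q • x + z) (T x) : ℂ) +
      inner ℂ (starRingEnd ℂ q • x + -z) (T x) = 2 * (q * inner ℂ x (T x)) := by
    rw [← inner_add_left, add_add_add_comm, add_neg_cancel, add_zero, ← two_smul ℂ,
      smul_smul, inner_smul_left]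
    simp [mul_assoc, map_ofNat]
  have := norm_add_le (inner ℂ (starRingEnd ℂ q • x + z) (T x) : ℂ)
    (inner ℂ (starRingEnd ℂ q • x + -z) (T x))
  rw [hsum, norm_mul, norm_mul, Complex.norm_two] at this
  linarith

theorem exists_inner_eq_zero_norm_sq_eq {q : ℂ} {x₁ y₁ : H} (hx₁ : ‖x₁‖ = 1) (hy₁ : ‖y₁‖ = 1)
    (hq : (inner ℂ y₁ x₁ : ℂ) = q) {x : H} (hx : ‖x‖ = 1) :
    ∃ z : H, (inner ℂ x z : ℂ) = 0 ∧ ‖z‖ ^ 2 = 1 - ‖q‖ ^ 2 := by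
  have hq_le : ‖q‖ ≤ 1 := by simpa [hq, hx₁, hy₁] using norm_inner_le_norm (𝕜 := ℂ) y₁ x₁
  rcases hq_le.eq_or_lt with hq_eq | hq_lt
  · exact ⟨0, inner_zero_right _, by simp [hq_eq]⟩
  have hK : (Submodule.span ℂ {x})ᗮ ≠ ⊥ := by
    rw [Ne, Submodule.orthogonal_eq_bot_iff]
    intro htop
    obtain ⟨a, rfl⟩ := Submodule.mem_span_singleton.mp (htop ▸ Submodule.mem_top : x₁ ∈ _)
    obtain ⟨b, rfl⟩ := Submodule.mem_span_singleton.mp (htop ▸ Submodule.mem_top : y₁ ∈ _)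
    rw [norm_smul, hx, mul_one] at hx₁ hy₁
    rw [← hq, inner_smul_left, inner_smul_right, inner_self_eq_norm_sq_to_K, hx] at hq_lt
    simp [hx₁, hy₁] at hq_lt
  have := Submodule.nontrivial_iff_ne_bot.mpr hK
  obtain ⟨z, hz⟩ := exists_norm_eq (Submodule.span ℂ {x})ᗮ (Real.sqrt_nonneg (1 - ‖q‖ ^ 2))
  refine ⟨z, Submodule.inner_right_of_mem_orthogonal (Submodule.mem_span_singleton_self x) z.2, ?_⟩
  change ‖z‖ ^ 2 = _
  rw [hz, Real.sq_sqrt (by nlinarith [norm_nonneg q])]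

theorem norm_mul_numRadius_le_qNumRadius {q : ℂ}
    (hq : ∃ x y : H, ‖x‖ = 1 ∧ ‖y‖ = 1 ∧ (inner ℂ y x : ℂ) = q) (T : H →L[ℂ] H) :
    ‖q‖ * numRadius T ≤ qNumRadius q T := by
  obtain ⟨x₁, y₁, hx₁, hy₁, hq⟩ := hq
  rw [numRadius, ← smul_eq_mul, ← Real.sSup_smul_of_nonneg (norm_nonneg q)]
  refine Real.sSup_le ?_ (qNumRadius_nonneg q T)
  rintro _ ⟨_, ⟨x, hx, rfl⟩, rfl⟩
  obtain ⟨z, hxz, hz⟩ := exists_inner_eq_zero_norm_sq_eq hx₁ hy₁ hq hx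
  exact norm_mul_norm_inner_le_qNumRadius T hx hxz hz

theorem norm_mul_opNorm_le_qNumRadius {q : ℂ}
    (hq : ∃ x y : H, ‖x‖ = 1 ∧ ‖y‖ = 1 ∧ (inner ℂ y x : ℂ) = q) {T : H →L[ℂ] H}
    (hT : (T : H →ₗ[ℂ] H).IsSymmetric) :
    ‖q‖ * ‖T‖ ≤ qNumRadius q T :=
  (mul_le_mul_of_nonneg_left (opNorm_le_numRadius hT) (norm_nonneg q)).trans
    (norm_mul_numRadius_le_qNumRadius hq T)

end

theorem isSymmetric_mCLM {n : ℕ} {A : Matrix (Fin n) (Fin n) ℂ} (hA : A.IsHermitian) :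
    (mCLM A : EuclideanSpace ℂ (Fin n) →ₗ[ℂ] EuclideanSpace ℂ (Fin n)).IsSymmetric :=
  Matrix.isSymmetric_toEuclideanLin_iff.mpr hA

theorem mCLM_mul {n : ℕ} (A B : Matrix (Fin n) (Fin n) ℂ) : mCLM (A * B) = mCLM A * mCLM B :=
  map_mul _ A B

theorem stmt4_general {n : ℕ} (A B : Matrix (Fin n) (Fin n) ℂ)
    (hA : A.PosSemidef) (hB : B.PosSemidef)
    (q : ℂ) :
    ‖q‖ ^ 2 * qNumRadius q (mCLM (A * B)) ≤
      qNumRadius q (mCLM A) * qNumRadius q (mCLM B) := by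
  by_cases hq : ∃ x y : EuclideanSpace ℂ (Fin n), ‖x‖ = 1 ∧ ‖y‖ = 1 ∧ (inner ℂ y x : ℂ) = q
  · calc ‖q‖ ^ 2 * qNumRadius q (mCLM (A * B))
        ≤ ‖q‖ ^ 2 * (‖mCLM A‖ * ‖mCLM B‖) := by
          gcongr
          exact (qNumRadius_le_opNorm q _).trans (mCLM_mul A B ▸ norm_mul_le _ _)
      _ = (‖q‖ * ‖mCLM A‖) * (‖q‖ * ‖mCLM B‖) := by ring
      _ ≤ qNumRadius q (mCLM A) * qNumRadius q (mCLM B) :=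
          mul_le_mul (norm_mul_opNorm_le_qNumRadius hq (isSymmetric_mCLM hA.1))
            (norm_mul_opNorm_le_qNumRadius hq (isSymmetric_mCLM hB.1)) (by positivity)
            (qNumRadius_nonneg q _)
  · rw [qNumRadius_eq_zero hq, mul_zero]
    exact mul_nonneg (qNumRadius_nonneg q _) (qNumRadius_nonneg q _)

theorem stmt4 {n : ℕ} (A B : Matrix (Fin n) (Fin n) ℂ)
    (hA : A.PosSemidef) (hB : B.PosSemidef)
    (q : ℂ) (hq : 0 < ‖q‖) (hq1 : ‖q‖ ≤ 1) :
    ‖q‖ ^ 2 * qNumRadius q (mCLM (A * B)) ≤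
      qNumRadius q (mCLM A) * qNumRadius q (mCLM B) :=
  stmt4_general A B hA hB q
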